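/- arXiv:2506.13911 — 2 statements merged into one kernel-verified Lean document; each statement's English description precedes it below -/
import Mathlib

section
/- For every d ≥ 0, the separating power of HE-GNN node classifiers of nesting depth d equals that of GML(↓) sentences of ↓-nesting-depth at most d: ρ(HE-GNN-(d)) = ρ(GML(↓^d)). Consequently (taking the union over all d), ρ(HE-GNN) = ρ(GML(↓)). That is, two pointed graphs (G,v) and (G',v') satisfy cls(G,v)=cls(G',v') for all nesting-depth-d HE-GNN classifiers cls if and only if they satisfy exactly the same GML(↓^d) sentences. -/
open Classical

/-! ### Graphs with `p` binary node features -/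

/-- A finite undirected graph with node labels over `p` binary features. -/
structure LabGraph (p : ℕ) : Type 1 where
  V : Type
  fintypeV : Fintype V
  decEqV : DecidableEq V
  adj : V → V → Prop
  symm : ∀ {u v}, adj u v → adj v u
  irrefl : ∀ v, ¬ adj v v
  lab : V → Fin p → Prop

attribute [instance] LabGraph.fintypeV LabGraph.decEqV

namespace LabGraph

variable {p : ℕ}

/-- The finset of neighbours of a node. -/
noncomputable def nbrFinset (G : LabGraph p) (v : G.V) : Finset G.V :=
  Finset.univ.filter (fun u => G.adj v u)

/-- Multi-hot label encoding. -/
noncomputable def embG (G : LabGraph p) (v : G.V) : Fin p → ℝ :=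
  fun i => if G.lab v i then 1 else 0

/-- `G.within v r u` : node `u` is at distance at most `r` from `v`. -/
def within (G : LabGraph p) (v : G.V) : ℕ → G.V → Prop
  | 0 => fun u => u = v
  | (r+1) => fun u => G.within v r u ∨ ∃ w, G.within v r w ∧ G.adj w u

theorem within_self (G : LabGraph p) (v : G.V) : ∀ r, G.within v r v
  | 0 => rfl
  | (r+1) => Or.inl (G.within_self v r)

/-- Induced subgraph on a set of nodes. -/
noncomputable def induce (G : LabGraph p) (S : Set G.V) : LabGraph p where
  V := {u // u ∈ S}
  fintypeV := Fintype.ofFinite _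
  decEqV := inferInstance
  adj a b := G.adj a.1 b.1
  symm h := G.symm h
  irrefl a h := G.irrefl a.1 h
  lab a := G.lab a.1

/-- `G_v^r` : the induced subgraph on the radius-`r` neighbourhood of `v`. -/
noncomputable def ball (G : LabGraph p) (v : G.V) (r : ℕ) : LabGraph p :=
  G.induce {u | G.within v r u}

/-- The centre of `G_v^r`, as a node of `G_v^r`. -/
noncomputable def ballCenter (G : LabGraph p) (v : G.V) (r : ℕ) : (G.ball v r).V :=
  ⟨v, G.within_self v r⟩

end LabGraph

/-! ### GNNs -/

/-- A single message-passing layer: aggregation over the multiset of neighbour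
embeddings and combination of the node embedding (concatenated via `Fin.append`)
with the aggregated value. -/
structure GNNLayer (Din Dout : ℕ) : Type where
  agg : Multiset (Fin Din → ℝ) → (Fin Din → ℝ)
  com : (Fin (Din + Din) → ℝ) → (Fin Dout → ℝ)

/-- A `(D,D')`-GNN: a nonempty sequence of layers with matching dimensions. -/
inductive GNN : ℕ → ℕ → Type
  | last {D D'} (l : GNNLayer D D') : GNN D D'
  | cons {D Dm D'} (l : GNNLayer D Dm) (rest : GNN Dm D') : GNN D D'

noncomputable def GNNLayer.apply {p Din Dout : ℕ} (l : GNNLayer Din Dout) (G : LabGraph p)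
    (emb : G.V → Fin Din → ℝ) : G.V → Fin Dout → ℝ :=
  fun v => l.com (Fin.append (emb v) (l.agg ((G.nbrFinset v).val.map emb)))

/-- Running a GNN on an embedded graph. -/
noncomputable def GNN.run {p : ℕ} : {D D' : ℕ} → GNN D D' → (G : LabGraph p) →
    (G.V → Fin D → ℝ) → (G.V → Fin D' → ℝ)
  | _, _, .last l, G, emb => l.apply G emb
  | _, _, .cons l rest, G, emb => rest.run G (l.apply G emb)

/-- The node classifier of a `(p,1)`-GNN (as a proposition: value `1` ↔ output `> 0`). -/
def GNN.clsP {p : ℕ} (A : GNN p 1) (G : LabGraph p) (v : G.V) : Prop :=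
  0 < A.run G G.embG v 0

/-- The node classifier of a `(p,1)`-GNN, as a boolean value. -/
noncomputable def GNN.cls {p : ℕ} (A : GNN p 1) (G : LabGraph p) (v : G.V) : Bool :=
  if A.clsP G v then true else false

/-! ### Hierarchical Ego GNNs -/

/-- A `(D,D')`-HE-GNN of nesting depth `d`. -/
inductive HEGNN : ℕ → ℕ → ℕ → Type
  | base {D D'} (A : GNN D D') : HEGNN 0 D D'
  | nest {d D D'' D'} (B : HEGNN d (D+1) D'') (C : GNN (D + D'') D') : HEGNN (d+1) D D'

noncomputable def HEGNN.run {p : ℕ} : {d D D' : ℕ} → HEGNN d D D' → (G : LabGraph p) →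
    (G.V → Fin D → ℝ) → (G.V → Fin D' → ℝ)
  | _, _, _, .base A, G, emb => A.run G emb
  | _, _, _, .nest B C, G, emb =>
      C.run G (fun v => Fin.append (emb v)
        (B.run G (fun u => Fin.append (emb u) (fun _ => if u = v then (1:ℝ) else 0)) v))

def HEGNN.clsP {p d : ℕ} (A : HEGNN d p 1) (G : LabGraph p) (v : G.V) : Prop :=
  0 < A.run G G.embG v 0

noncomputable def HEGNN.cls {p d : ℕ} (A : HEGNN d p 1) (G : LabGraph p) (v : G.V) : Bool :=
  if A.clsP G v then true else false

/-! ### Hierarchical Ego Subgraph GNNs -/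

/-- A `(D,D')`-HES-GNN of depth `d`; each nesting step carries its own radius `r`. -/
inductive HESGNN : ℕ → ℕ → ℕ → Type
  | base {D D'} (A : GNN D D') : HESGNN 0 D D'
  | nest {d D D'' D'} (r : ℕ) (B : HESGNN d (D+1) D'') (C : GNN (D + D'') D') :
      HESGNN (d+1) D D'

noncomputable def HESGNN.run {p : ℕ} : {d D D' : ℕ} → HESGNN d D D' → (G : LabGraph p) →
    (G.V → Fin D → ℝ) → (G.V → Fin D' → ℝ)
  | _, _, _, .base A, G, emb => A.run G emb
  | _, _, _, .nest r B C, G, emb =>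
      C.run G (fun v => Fin.append (emb v)
        (B.run (G.ball v r)
          (fun u => Fin.append (emb u.1) (fun _ => if u.1 = v then (1:ℝ) else 0))
          (G.ballCenter v r)))

/-- All subgraph restrictions in the HES-GNN use radius `r`. -/
def HESGNN.radIs : {d D D' : ℕ} → ℕ → HESGNN d D D' → Prop
  | _, _, _, _, .base _ => True
  | _, _, _, r, .nest r' B _ => r' = r ∧ B.radIs r

def HESGNN.clsP {p d : ℕ} (A : HESGNN d p 1) (G : LabGraph p) (v : G.V) : Prop :=
  0 < A.run G G.embG v 0

noncomputable def HESGNN.cls {p d : ℕ} (A : HESGNN d p 1) (G : LabGraph p) (v : G.V) : Bool :=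
  if A.clsP G v then true else false
/-! ### Graded modal logic GML -/

inductive GML (p : ℕ) : Type
  | prop (i : Fin p)
  | top
  | and (φ ψ : GML p)
  | not (φ : GML p)
  | dia (k : ℕ) (φ : GML p)

/-- Satisfaction of a GML formula at a node. -/
def GML.sat {p : ℕ} (G : LabGraph p) : GML p → G.V → Prop
  | .prop i, v => G.lab v i
  | .top, _ => True
  | .and φ ψ, v => φ.sat G v ∧ ψ.sat G v
  | .not φ, v => ¬ φ.sat G v
  | .dia k φ, v => k ≤ Nat.card {u : G.V // G.adj v u ∧ φ.sat G u}

/-! ### Graded hybrid logic GML(↓) -/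

inductive GMLd (p : ℕ) : Type
  | prop (i : Fin p)
  | var (x : ℕ)
  | top
  | and (φ ψ : GMLd p)
  | not (φ : GMLd p)
  | dia (k : ℕ) (φ : GMLd p)
  | bind (x : ℕ) (φ : GMLd p)

/-- Satisfaction of a GML(↓) formula at a node, relative to an assignment of
variables to (marked) nodes; `↓x.φ` marks the current node with `x`. -/
def GMLd.sat {p : ℕ} (G : LabGraph p) : GMLd p → (ℕ → Option G.V) → G.V → Prop
  | .prop i, _, v => G.lab v i
  | .var x, g, v => g x = some v
  | .top, _, _ => True
  | .and φ ψ, g, v => φ.sat G g v ∧ ψ.sat G g v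
  | .not φ, g, v => ¬ φ.sat G g v
  | .dia k φ, g, v => k ≤ Nat.card {u : G.V // G.adj v u ∧ φ.sat G g u}
  | .bind x φ, g, v => φ.sat G (Function.update g x (some v)) v

def GMLd.free {p : ℕ} : GMLd p → Set ℕ
  | .prop _ => ∅
  | .var x => {x}
  | .top => ∅
  | .and φ ψ => φ.free ∪ ψ.free
  | .not φ => φ.free
  | .dia _ φ => φ.free
  | .bind x φ => φ.free \ {x}

/-- A sentence has no free variables. -/
def GMLd.Sentence {p : ℕ} (φ : GMLd p) : Prop := φ.free = ∅

/-- The ↓-nesting-depth of a formula. -/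
def GMLd.bindDepth {p : ℕ} : GMLd p → ℕ
  | .prop _ => 0
  | .var _ => 0
  | .top => 0
  | .and φ ψ => max φ.bindDepth ψ.bindDepth
  | .not φ => φ.bindDepth
  | .dia _ φ => φ.bindDepth
  | .bind _ φ => φ.bindDepth + 1

/-- Satisfaction of a sentence (empty assignment). -/
def GMLd.satS {p : ℕ} (G : LabGraph p) (φ : GMLd p) (v : G.V) : Prop :=
  φ.sat G (fun _ => none) v

/-! ### Graded hybrid subgraph logic: the fragment GML(↓_W) -/

inductive GMLW (p : ℕ) : Type
  | prop (i : Fin p)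
  | var (x : ℕ)
  | top
  | and (φ ψ : GMLW p)
  | not (φ : GMLW p)
  | dia (k : ℕ) (φ : GMLW p)
  /-- `↓_{W^r} x. φ`, i.e. `↓x. W^r φ`. -/
  | bindW (x : ℕ) (r : ℕ) (φ : GMLW p)

/-- Restrict an assignment along passage to an induced subgraph: markings of
nodes outside the subgraph disappear. -/
noncomputable def restrictAssign {p : ℕ} {G : LabGraph p} (S : Set G.V)
    (g : ℕ → Option G.V) : ℕ → Option (G.induce S).V :=
  fun x => (g x).bind (fun w => if h : w ∈ S then some ⟨w, h⟩ else none)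

/-- Satisfaction for the fragment GML(↓_W): `↓x.W^r φ` marks the current node `v`
with `x` and evaluates `φ` in the subgraph `G_v^r`. -/
noncomputable def GMLW.sat {p : ℕ} : GMLW p → (G : LabGraph p) → (ℕ → Option G.V) → G.V → Prop
  | .prop i, G, _, v => G.lab v i
  | .var x, _, g, v => g x = some v
  | .top, _, _, _ => True
  | .and φ ψ, G, g, v => φ.sat G g v ∧ ψ.sat G g v
  | .not φ, G, g, v => ¬ φ.sat G g v
  | .dia k φ, G, g, v => k ≤ Nat.card {u : G.V // G.adj v u ∧ φ.sat G g u}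
  | .bindW x r φ, G, g, v =>
      φ.sat (G.ball v r) (restrictAssign _ (Function.update g x (some v))) (G.ballCenter v r)

def GMLW.free {p : ℕ} : GMLW p → Set ℕ
  | .prop _ => ∅
  | .var x => {x}
  | .top => ∅
  | .and φ ψ => φ.free ∪ ψ.free
  | .not φ => φ.free
  | .dia _ φ => φ.free
  | .bindW x _ φ => φ.free \ {x}

def GMLW.Sentence {p : ℕ} (φ : GMLW p) : Prop := φ.free = ∅

/-- The nesting depth of `↓_{W^r}` operators. -/
def GMLW.bindDepth {p : ℕ} : GMLW p → ℕ
  | .prop _ => 0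
  | .var _ => 0
  | .top => 0
  | .and φ ψ => max φ.bindDepth ψ.bindDepth
  | .not φ => φ.bindDepth
  | .dia _ φ => φ.bindDepth
  | .bindW _ _ φ => φ.bindDepth + 1

/-- All `↓_{W}` operators in the formula use radius `r`. -/
def GMLW.radIs {p : ℕ} (r : ℕ) : GMLW p → Prop
  | .prop _ => True
  | .var _ => True
  | .top => True
  | .and φ ψ => φ.radIs r ∧ ψ.radIs r
  | .not φ => φ.radIs r
  | .dia _ φ => φ.radIs r
  | .bindW _ r' φ => r' = r ∧ φ.radIs r

noncomputable def GMLW.satS {p : ℕ} (G : LabGraph p) (φ : GMLW p) (v : G.V) : Prop :=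
  φ.sat G (fun _ => none) v
/-! ### Weisfeiler–Leman and Individualization-Refinement -/

/-- An (ordered) space of colors together with a perfect (injective) hash
function whose domains are: node labelings (initial colors), pairs of a color
and a multiset of colors (refinement), and pairs of a color and a marking
(individualization). -/
structure HashSetup (p : ℕ) : Type 1 where
  C : Type
  linC : LinearOrder C
  hInit : (Fin p → Prop) → C
  hRefine : C → Multiset C → C
  hIndiv : C → Prop → C
  inj : Function.Injective
    (Sum.elim hInit (Sum.elim (fun y : C × Multiset C => hRefine y.1 y.2)
      (fun y : C × Prop => hIndiv y.1 y.2)))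

/-- A coloring is discrete if all color classes are singletons. -/
def Discrete {V C : Type} (col : V → C) : Prop :=
  ∀ u w, col u = col w → u = w

/-- One round of color refinement. -/
noncomputable def wlStep {p : ℕ} (H : HashSetup p) (G : LabGraph p)
    (col : G.V → H.C) : G.V → H.C :=
  fun v => H.hRefine (col v) ((G.nbrFinset v).val.map col)

/-- `wlIter H G d col` = `WL(G, col, d)`. -/
noncomputable def wlIter {p : ℕ} (H : HashSetup p) (G : LabGraph p) :
    ℕ → (G.V → H.C) → (G.V → H.C)
  | 0, col => col
  | (d+1), col => wlStep H G (wlIter H G d col)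

/-- The initial coloring `col_G`. -/
noncomputable def initCol {p : ℕ} (H : HashSetup p) (G : LabGraph p) : G.V → H.C :=
  fun v => H.hInit (G.lab v)

/-- Rose trees labeled by multisets of colors.  (Children are kept in a list;
the isomorphism relation below disregards their order.) -/
inductive CTree (C : Type) : Type
  | node (label : Multiset C) (children : List (CTree C))

/-- Isomorphism of trees whose nodes are labeled by multisets of colors. -/
inductive CTree.Iso {C : Type} : CTree C → CTree C → Prop
  | node {l : Multiset C} {cs1 cs2 : List (CTree C)}
      (e : Fin cs1.length ≃ Fin cs2.length)
      (h : ∀ i : Fin cs1.length, CTree.Iso (cs1.get i) (cs2.get (e i))) :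
      CTree.Iso (.node l cs1) (.node l cs2)

/-- The multiset of all colors of a coloring. -/
noncomputable def colMultiset {p : ℕ} (H : HashSetup p) (G : LabGraph p)
    (col : G.V → H.C) : Multiset H.C :=
  Finset.univ.val.map col

/-- `WLIR H G d col` = the IR tree `WL-IR(G, col, d)` with at most `d`
individualization steps, with colorings recorded by their color multisets. -/
noncomputable def WLIR {p : ℕ} (H : HashSetup p) (G : LabGraph p) :
    ℕ → (G.V → H.C) → CTree H.C
  | 0, col => .node (colMultiset H G (wlIter H G (Fintype.card G.V) col)) []
  | (d+1), col =>
    let col' := wlIter H G (Fintype.card G.V) col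
    if hdisc : Discrete col' then .node (colMultiset H G col') []
    else
      letI := H.linC
      let bigs : Finset H.C := (Finset.univ.image col').filter
        (fun c => 1 < (Finset.univ.filter (fun v => col' v = c)).card)
      have hne : bigs.Nonempty := by
        simp only [Discrete, not_forall] at hdisc
        obtain ⟨u, w, hc, hne'⟩ := hdisc
        refine ⟨col' u, Finset.mem_filter.mpr
          ⟨Finset.mem_image_of_mem _ (Finset.mem_univ u), ?_⟩⟩
        exact Finset.one_lt_card.mpr
          ⟨u, by simp, w, by simp [hc.symm], hne'⟩
      let c := bigs.min' hne
      .node (colMultiset H G col')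
        (((Finset.univ.filter (fun v => col' v = c)).toList).map
          (fun vi => WLIR H G d (fun v => H.hIndiv (col' v) (v = vi))))

/-- `G ≡_{WL-IR-d} G'` : the IR trees with `d` individualization steps are
isomorphic. -/
noncomputable def WLIRequiv {p : ℕ} (H : HashSetup p) (G G' : LabGraph p) (d : ℕ) : Prop :=
  CTree.Iso (WLIR H G d (initCol H G)) (WLIR H G' d (initCol H G'))

/-- Isomorphism of labeled graphs. -/
def LabGraph.Iso {p : ℕ} (G G' : LabGraph p) : Prop :=
  ∃ f : G.V ≃ G'.V, (∀ u v, G.adj u v ↔ G'.adj (f u) (f v)) ∧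
    ∀ v i, G.lab v i ↔ G'.lab (f v) i
/-! ### The k-dimensional Weisfeiler–Leman test -/

/-- The type of `k`-WL colors after `i` refinement rounds (shared between all
graphs, so colors of different graphs are directly comparable). -/
def KColor (p k : ℕ) : ℕ → Type
  | 0 => ((Fin k → Fin k → Prop) × (Fin k → Fin k → Prop) × (Fin k → Fin p → Prop))
  | (i+1) => KColor p k i × (Fin k → Multiset (KColor p k i))

/-- The `k`-WL coloring of `k`-tuples after `i` rounds: the initial color is the
isomorphism type of the tuple (equalities, adjacencies, labels); each round
refines by, for each position, the multiset of colors of all one-point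
modifications of the tuple. -/
noncomputable def kwl (p k : ℕ) (G : LabGraph p) :
    (i : ℕ) → (Fin k → G.V) → KColor p k i
  | 0, t => (fun i j => t i = t j, fun i j => G.adj (t i) (t j), fun i a => G.lab (t i) a)
  | (i+1), t => (kwl p k G i t,
      fun j => Finset.univ.val.map (fun w => kwl p k G i (Function.update t j w)))

/-- `(G,v)` and `(G',v')` are *not* distinguished by the `k`-dimensional WL test:
the colors of the constant tuples `(v,…,v)` and `(v',…,v')` agree at every round
(equivalently, the stable colors agree). -/
noncomputable def kwlEquiv (p k : ℕ) (G : LabGraph p) (v : G.V) (G' : LabGraph p) (v' : G'.V) : Prop :=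
  ∀ i : ℕ, kwl p k G i (fun _ => v) = kwl p k G' i (fun _ => v')
/-! ### Rooted graphs, homomorphism counts, Sum/ReLU-FFNN GNNs, degree bounds -/

namespace LabGraph
variable {p : ℕ}

/-- `(F,u)` is a rooted graph: every node is reachable from `u`. -/
def Rooted (F : LabGraph p) (u : F.V) : Prop := ∀ w, ∃ r, F.within u r w

/-- Every node of `G` has degree at most `N`. -/
def degLe (G : LabGraph p) (N : ℕ) : Prop := ∀ v, Nat.card {u : G.V // G.adj v u} ≤ N

end LabGraph

/-- The number of homomorphisms from the pointed graph `(F,u)` to `(G,v)`: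
maps sending the root to `v`, preserving edges, and preserving labels. -/
noncomputable def homCount {p : ℕ} (F G : LabGraph p) (u : F.V) (v : G.V) : ℕ :=
  Nat.card {h : F.V → G.V //
    h u = v ∧ (∀ ⦃w w'⦄, F.adj w w' → G.adj (h w) (h w')) ∧
    ∀ w i, F.lab w i → G.lab (h w) i}

/-- Pointwise sum aggregation. -/
def sumAgg (D : ℕ) : Multiset (Fin D → ℝ) → (Fin D → ℝ) :=
  fun M i => (M.map (fun x => x i)).sum

/-- ReLU feed-forward neural networks: compositions of affine maps and
coordinatewise ReLU. -/
inductive IsReLUFFNN : {n m : ℕ} → ((Fin n → ℝ) → (Fin m → ℝ)) → Prop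
  | affine {n m : ℕ} (W : Matrix (Fin m) (Fin n) ℝ) (b : Fin m → ℝ) :
      IsReLUFFNN (fun x => W.mulVec x + b)
  | relu {n : ℕ} : IsReLUFFNN (fun (x : Fin n → ℝ) i => max 0 (x i))
  | comp {n m k : ℕ} {f : (Fin n → ℝ) → (Fin m → ℝ)} {g : (Fin m → ℝ) → (Fin k → ℝ)} :
      IsReLUFFNN f → IsReLUFFNN g → IsReLUFFNN (fun x => g (f x))

/-- A layer uses Sum aggregation and a ReLU-FFNN combination function. -/
def GNNLayer.SumReLU {Din Dout : ℕ} (l : GNNLayer Din Dout) : Prop :=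
  l.agg = sumAgg Din ∧ IsReLUFFNN l.com

def GNN.SumReLU : {D D' : ℕ} → GNN D D' → Prop
  | _, _, .last l => l.SumReLU
  | _, _, .cons l rest => l.SumReLU ∧ rest.SumReLU

def HEGNN.SumReLU : {d D D' : ℕ} → HEGNN d D D' → Prop
  | _, _, _, .base A => A.SumReLU
  | _, _, _, .nest B C => B.SumReLU ∧ C.SumReLU
/-! ### Cycles, acyclicity, ego-rank, tree-width -/

namespace LabGraph
variable {p : ℕ}

/-- There is a cycle (length ≥ 3, distinct nodes, consecutive nodes adjacent,
cyclically) all of whose nodes lie in `S`. -/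
def CycleIn (G : LabGraph p) (S : Set G.V) : Prop :=
  ∃ (n : ℕ) (c : Fin n → G.V), 3 ≤ n ∧ Function.Injective c ∧ (∀ i, c i ∈ S) ∧
    ∀ i : Fin n, G.adj (c i) (c ⟨(i.val + 1) % n, Nat.mod_lt _ i.pos⟩)

/-- `G` is acyclic. -/
def Acyclic (G : LabGraph p) : Prop := ¬ G.CycleIn Set.univ

/-- `(G,v)` is c-acyclic: every cycle of `G` passes through `v`. -/
def CAcyclic (G : LabGraph p) (v : G.V) : Prop :=
  ∀ (n : ℕ) (c : Fin n → G.V), 3 ≤ n → Function.Injective c →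
    (∀ i : Fin n, G.adj (c i) (c ⟨(i.val + 1) % n, Nat.mod_lt _ i.pos⟩)) →
    ∃ i, c i = v

/-- Reachability inside a set `S` (paths are required to stay in `S`). -/
inductive ReachIn (G : LabGraph p) (S : Set G.V) : G.V → G.V → Prop
  | refl {a} (ha : a ∈ S) : ReachIn G S a a
  | tail {a b c} : ReachIn G S a b → G.adj b c → c ∈ S → ReachIn G S a c

/-- The set `S` induces a connected subgraph. -/
def ConnectedIn (G : LabGraph p) (S : Set G.V) : Prop :=
  ∀ a ∈ S, ∀ b ∈ S, G.ReachIn S a b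

/-- `G` is connected. -/
def Connected (G : LabGraph p) : Prop := ∀ a b : G.V, ∃ r, G.within a r b

end LabGraph

/-! #### Ego-rank -/

/-- Transitive closure of a partial map `dep` (so `DepCl dep w x` means
`x ∈ deps(w) = {dep(w), dep(dep(w)), …} \ {⊥}`). -/
inductive DepCl {V : Type} (dep : V → Option V) : V → V → Prop
  | base {w x} : dep w = some x → DepCl dep w x
  | step {w x y} : DepCl dep w x → dep x = some y → DepCl dep w y

/-- `deps(w)` as a set. -/
def deps {V : Type} (dep : V → Option V) (w : V) : Set V := {x | DepCl dep w x}

/-- `dep` is a dependency function for the rooted graph `(G,v)`. -/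
def IsDepFun {p : ℕ} (G : LabGraph p) (v : G.V) (dep : G.V → Option G.V) : Prop :=
  dep v = none ∧
  (∀ {w u}, G.adj w u → dep w = dep u ∨ w ∈ deps dep u ∨ u ∈ deps dep w) ∧
  (∀ o : Option G.V, ¬ G.CycleIn {w | dep w = o})

/-- The node rank of a node: `|deps(w)|`. -/
noncomputable def nodeRank {V : Type} (dep : V → Option V) (w : V) : ℕ :=
  Nat.card {x // DepCl dep w x}

/-- Ego-rank: the smallest achievable maximum node rank over all dependency
functions. -/
noncomputable def egoRank {p : ℕ} (G : LabGraph p) (v : G.V) : ℕ :=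
  sInf {k | ∃ dep, IsDepFun G v dep ∧ ∀ w, nodeRank dep w ≤ k}

/-! #### Tree decompositions and tree-width -/

/-- A tree decomposition of `G`: a (connected, acyclic) tree `T` with bags
covering all nodes and edges, such that each node's bags form a connected
subtree. -/
structure TreeDecomp (p : ℕ) (G : LabGraph p) : Type 1 where
  T : LabGraph 0
  conn : T.Connected
  acyc : T.Acyclic
  bag : T.V → Set G.V
  cover_v : ∀ u : G.V, ∃ t, u ∈ bag t
  cover_e : ∀ {u w : G.V}, G.adj u w → ∃ t, u ∈ bag t ∧ w ∈ bag t
  subtree : ∀ u : G.V, T.ConnectedIn {t | u ∈ bag t}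

/-- Tree-width: minimum over tree decompositions of (maximum bag size − 1). -/
noncomputable def treewidth {p : ℕ} (G : LabGraph p) : ℕ :=
  sInf {w | ∃ D : TreeDecomp p G, ∀ t, Nat.card (D.bag t) ≤ w + 1}
/-! ### Special graphs: cycles, disjoint unions, grids (all labels empty) -/

/-- The cycle graph `C_n` (for `n ≥ 3`), with empty node labels. -/
def cycleGraph (p n : ℕ) : LabGraph p where
  V := Fin n
  fintypeV := inferInstance
  decEqV := inferInstance
  adj i j := i ≠ j ∧ ((i.val + 1) % n = j.val ∨ (j.val + 1) % n = i.val)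
  symm h := ⟨h.1.symm, h.2.symm⟩
  irrefl _ h := h.1 rfl
  lab _ _ := False

/-- Disjoint union of two graphs. -/
def LabGraph.disjUnion {p : ℕ} (G1 G2 : LabGraph p) : LabGraph p where
  V := G1.V ⊕ G2.V
  fintypeV := inferInstance
  decEqV := inferInstance
  adj a b :=
    match a, b with
    | .inl x, .inl y => G1.adj x y
    | .inr x, .inr y => G2.adj x y
    | _, _ => False
  symm {a b} h := by
    cases a <;> cases b <;> simp_all <;> first | exact G1.symm h | exact G2.symm h
  irrefl a h := by
    cases a
    · exact G1.irrefl _ h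
    · exact G2.irrefl _ h
  lab a i :=
    match a with
    | .inl x => G1.lab x i
    | .inr x => G2.lab x i

/-- The `n × 2` grid graph, with empty node labels. -/
def gridGraph (p n : ℕ) : LabGraph p where
  V := Fin n × Fin 2
  fintypeV := inferInstance
  decEqV := inferInstance
  adj a b := (a.2 = b.2 ∧ (a.1.val + 1 = b.1.val ∨ b.1.val + 1 = a.1.val)) ∨
    (a.1 = b.1 ∧ a.2 ≠ b.2)
  symm h := by
    rcases h with ⟨h1, h2⟩ | ⟨h1, h2⟩
    · exact Or.inl ⟨h1.symm, h2.symm⟩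
    · exact Or.inr ⟨h1.symm, h2.symm⟩
  irrefl a h := by
    rcases h with ⟨_, h2 | h2⟩ | ⟨_, h2⟩
    · omega
    · omega
    · exact h2 rfl
  lab _ _ := False
/-! ### The witness graphs of Rattan–Seppelt: a central 4-cycle with attached
triangles and 6-cycles. -/

/-- Vertex type: 4 square nodes, 4 triangles (3 nodes each), 4 hexagons
(6 nodes each). -/
abbrev RSV : Type := Fin 4 ⊕ (Fin 4 × Fin 3) ⊕ (Fin 4 × Fin 6)

/-- Adjacency, parameterized by the owner (square corner) of each triangle and
of each hexagon: the square is a 4-cycle; each triangle/hexagon is complete to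
its owner; triangles are 3-cycles, hexagons are 6-cycles. -/
def rsAdj (tO hO : Fin 4 → Fin 4) : RSV → RSV → Prop
  | .inl a, .inl b => a ≠ b ∧ ((a.val + 1) % 4 = b.val ∨ (b.val + 1) % 4 = a.val)
  | .inl a, .inr (.inl (t, _)) => a = tO t
  | .inr (.inl (t, _)), .inl a => a = tO t
  | .inl a, .inr (.inr (s, _)) => a = hO s
  | .inr (.inr (s, _)), .inl a => a = hO s
  | .inr (.inl (t, i)), .inr (.inl (t', i')) => t = t' ∧ i ≠ i'
  | .inr (.inr (s, j)), .inr (.inr (s', j')) =>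
      s = s' ∧ ((j.val + 1) % 6 = j'.val ∨ (j'.val + 1) % 6 = j.val)
  | _, _ => False

def rsGraph (p : ℕ) (tO hO : Fin 4 → Fin 4) : LabGraph p where
  V := RSV
  fintypeV := inferInstance
  decEqV := inferInstance
  adj := rsAdj tO hO
  symm {u v} h := by
    rcases u with a | ⟨t, i⟩ | ⟨s, j⟩ <;> rcases v with b | ⟨t', i'⟩ | ⟨s', j'⟩ <;>
      simp only [rsAdj] at h ⊢ <;> tauto
  irrefl u h := by
    rcases u with a | ⟨t, i⟩ | ⟨s, j⟩ <;> simp only [rsAdj] at h <;> omega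
  lab _ _ := False

/-- `G`: triangles attached to `u₁` (index 0) and `u₄` (index 3), hexagons to
`u₂` (index 1) and `u₃` (index 2). -/
def rsG (p : ℕ) : LabGraph p :=
  rsGraph p (fun t => if t.val < 2 then 0 else 3) (fun s => if s.val < 2 then 1 else 2)

/-- `G'`: triangles attached to the opposite corners `u₁` (index 0) and `u₃`
(index 2), hexagons to `u₂` (index 1) and `u₄` (index 3). -/
def rsG' (p : ℕ) : LabGraph p :=
  rsGraph p (fun t => if t.val < 2 then 0 else 2) (fun s => if s.val < 2 then 1 else 3)
/-! ### Graph-level separation by node classifiers -/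

/-- `G ≡_{GNN} G'`: for every GNN node classifier, the multisets of classifier
values over all nodes coincide. -/
noncomputable def gnnGraphEquiv (p : ℕ) (G G' : LabGraph p) : Prop :=
  ∀ A : GNN p 1, Finset.univ.val.map (A.cls G) = Finset.univ.val.map (A.cls G')

/-- `G ≡_{HE-GNN-(d)} G'`: for every HE-GNN node classifier of nesting depth
`d`, the multisets of classifier values over all nodes coincide. -/
noncomputable def hegnnGraphEquiv (p d : ℕ) (G G' : LabGraph p) : Prop :=
  ∀ A : HEGNN d p 1, Finset.univ.val.map (A.cls G) = Finset.univ.val.map (A.cls G')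

/-- The eccentricity of `u` in `G`: the maximal distance from `u` to any node. -/
noncomputable def LabGraph.eccFrom {p : ℕ} (G : LabGraph p) (u : G.V) : ℕ :=
  Finset.univ.sup (fun w => sInf {r | G.within u r w})


/-
Both sides are characterised by one hierarchical colour refinement. Refining a colouring for
`k` rounds records, round by round, the multiset of the neighbours' colours. The depth-`(d+1)`
seed of a node `u` pairs its colour with the depth-`d` colour of `u` in the graph in which `u`
alone is marked, and the depth-`d` ego colour after `k` rounds refines the depth-`d` seeds.

An HE-GNN of nesting depth `d` only sees these colours: each layer is a function of one
refinement round, and the ego network of the nested part is exactly the marking of the seed.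
Conversely, as combination and aggregation functions are arbitrary, layers can decode an
injective real encoding of the previous colours (via `Function.extend`), so some HE-GNN
classifier accepts exactly the nodes of a given colour.

On the logic side the binder `↓x` plays the role of the marking: truth of a formula of
`↓`-depth `d` is a function of the depth-`d` colours, and conversely each colour is defined by
a sentence of `↓`-depth `d`, obtained by counting neighbours of each colour with `◇^{≥n}` and
binding a fresh variable for every level of marking. So both relations in the theorem are
equality of the depth-`d` ego colours after every number of rounds.
-/

section EgoRefinement

open Function

variable {p : ℕ}

def RefColour (σ : Type) : ℕ → Type
  | 0 => σ
  | k + 1 => RefColour σ k × Multiset (RefColour σ k)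

instance RefColour.countable (σ : Type) [Countable σ] : ∀ k, Countable (RefColour σ k)
  | 0 => inferInstanceAs (Countable σ)
  | k + 1 =>
    haveI := RefColour.countable σ k
    inferInstanceAs (Countable (_ × Multiset _))

def RefColour.root {σ : Type} : {k : ℕ} → RefColour σ k → σ
  | 0, c => c
  | _ + 1, c => root c.1

def RefColour.drop {σ : Type} {k : ℕ} : (n : ℕ) → RefColour σ (k + n) → RefColour σ k
  | 0, c => c
  | n + 1, c => drop n c.1

noncomputable def LabGraph.refineColour {σ : Type} (G : LabGraph p) (c : G.V → σ) :
    (k : ℕ) → G.V → RefColour σ k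
  | 0 => c
  | k + 1 => fun v => (G.refineColour c k v, (G.nbrFinset v).val.map (G.refineColour c k))

theorem LabGraph.root_refineColour {σ : Type} (G : LabGraph p) (c : G.V → σ) :
    ∀ k v, (G.refineColour c k v).root = c v
  | 0, _ => rfl
  | k + 1, v => G.root_refineColour c k v

theorem LabGraph.drop_refineColour {σ : Type} (G : LabGraph p) (c : G.V → σ) {k : ℕ} :
    ∀ n v, (G.refineColour c (k + n) v).drop n = G.refineColour c k v
  | 0, _ => rfl
  | n + 1, v => G.drop_refineColour c n v

theorem RefColour.exists_factor_of_le {σ : Type} {j k : ℕ} (h : j ≤ k) :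
    ∃ π : RefColour σ k → RefColour σ j, ∀ (G : LabGraph p) (c : G.V → σ) v,
      G.refineColour c j v = π (G.refineColour c k v) := by
  obtain ⟨n, rfl⟩ := Nat.exists_eq_add_of_le h
  exact ⟨drop n, fun G c v => (G.drop_refineColour c n v).symm⟩

def EgoSeed : ℕ → Type → ℕ → Type
  | 0, τ, _ => τ
  | d + 1, τ, s => τ × RefColour (EgoSeed d (τ × Prop) s) s

instance EgoSeed.countable : ∀ (d : ℕ) (τ : Type) [Countable τ] (s : ℕ),
    Countable (EgoSeed d τ s)
  | 0, τ, _, _ => inferInstanceAs (Countable τ)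
  | d + 1, τ, _, s =>
    haveI := EgoSeed.countable d (τ × Prop) s
    inferInstanceAs (Countable (τ × RefColour _ s))

def EgoSeed.base : {d : ℕ} → {τ : Type} → {s : ℕ} → EgoSeed d τ s → τ
  | 0, _, _, t => t
  | _ + 1, _, _, t => t.1

def markAt {V τ : Type} (γ : V → τ) (v : V) : V → τ × Prop := fun w => (γ w, w = v)

noncomputable def LabGraph.egoSeed (G : LabGraph p) :
    (d s : ℕ) → {τ : Type} → (G.V → τ) → G.V → EgoSeed d τ s
  | 0, _, _, γ => γ
  | d + 1, s, _, γ => fun u => (γ u, G.refineColour (G.egoSeed d s (markAt γ u)) s u)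

theorem LabGraph.base_egoSeed (G : LabGraph p) {τ : Type} (γ : G.V → τ) (s : ℕ) :
    ∀ d u, (G.egoSeed d s γ u).base = γ u
  | 0, _ => rfl
  | _ + 1, _ => rfl

noncomputable def LabGraph.egoColour (G : LabGraph p) (d k : ℕ) :
    G.V → RefColour (EgoSeed d (Fin p → Prop) k) k :=
  G.refineColour (G.egoSeed d k G.lab) k

noncomputable def GNNLayer.onColour {σ : Type} {D D' : ℕ} (l : GNNLayer D D')
    (f : σ → Fin D → ℝ) (a : σ × Multiset σ) : Fin D' → ℝ :=
  l.com (Fin.append (f a.1) (l.agg (a.2.map f)))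

theorem GNNLayer.apply_comp {σ : Type} {D D' : ℕ} (l : GNNLayer D D') (G : LabGraph p)
    (f : σ → Fin D → ℝ) (c : G.V → σ) (v : G.V) :
    l.apply G (fun u => f (c u)) v = l.onColour f (c v, (G.nbrFinset v).val.map c) := by
  rw [GNNLayer.onColour, Multiset.map_map]
  rfl

theorem GNN.run_factors : ∀ {D D' : ℕ} (A : GNN D D'), ∃ n, ∀ {σ : Type} {k r : ℕ}, k + n ≤ r →
    ∀ f : RefColour σ k → Fin D → ℝ, ∃ f' : RefColour σ r → Fin D' → ℝ,
      ∀ (G : LabGraph p) (c : G.V → σ) (v : G.V),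
        A.run G (fun u => f (G.refineColour c k u)) v = f' (G.refineColour c r v)
  | _, _, .last l => ⟨1, fun {σ k r} hr f => by
      obtain ⟨π, hπ⟩ := RefColour.exists_factor_of_le (p := p) (σ := σ) hr
      exact ⟨fun a => l.onColour f (π a), fun G c v =>
        (l.apply_comp G f (G.refineColour c k) v).trans (congrArg (l.onColour f) (hπ G c v))⟩⟩
  | _, _, .cons l rest => by
      obtain ⟨n, hn⟩ := rest.run_factors
      refine ⟨n + 1, fun {σ k r} hr f => ?_⟩
      obtain ⟨f', hf'⟩ := hn (σ := σ) (k := k + 1) (r := r) (by omega) (l.onColour f)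
      refine ⟨f', fun G c v => ?_⟩
      rw [← hf']
      show rest.run G (l.apply G _) v = _
      congr 1
      funext u
      exact l.apply_comp G f (G.refineColour c k) u

noncomputable def appendMark {τ : Type} {D : ℕ} (g : τ → Fin D → ℝ) (a : τ × Prop) :
    Fin (D + 1) → ℝ :=
  Fin.append (g a.1) (fun _ => if a.2 then 1 else 0)

theorem HEGNN.run_nest {τ : Type} {d D D'' D' : ℕ} (B : HEGNN d (D + 1) D'')
    (C : GNN (D + D'') D') (G : LabGraph p) (g : τ → Fin D → ℝ) (γ : G.V → τ) :
    (HEGNN.nest B C).run G (fun u => g (γ u)) =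
      C.run G fun v => Fin.append (g (γ v)) (B.run G (fun u => appendMark g (markAt γ v u)) v) := by
  simp only [HEGNN.run, appendMark, markAt]
  -- the two sides differ only in the `Decidable` instance of `u = v`
  congr! with v u
  congr

/- Decoupling the seed parameter `s` from the number of rounds `r` lets the inner and the outer
GNN of a nested HE-GNN be served by one colour, without relating colours for different seed
parameters. -/
theorem HEGNN.run_factors : ∀ {d D D' : ℕ} (A : HEGNN d D D') {τ : Type} (g : τ → Fin D → ℝ),
    ∃ k₀, ∀ s r, k₀ ≤ s → k₀ ≤ r → ∃ f : RefColour (EgoSeed d τ s) r → Fin D' → ℝ,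
      ∀ (G : LabGraph p) (γ : G.V → τ) (v : G.V),
        A.run G (fun u => g (γ u)) v = f (G.refineColour (G.egoSeed d s γ) r v)
  | _, _, _, .base A, τ, g => by
      obtain ⟨n, hn⟩ := A.run_factors (p := p)
      exact ⟨n, fun s r _ hr => hn (σ := EgoSeed 0 τ s) (k := 0) (by omega) g⟩
  | _, _, _, .nest B C, τ, g => by
      obtain ⟨kB, hB⟩ := B.run_factors (appendMark g)
      obtain ⟨n, hn⟩ := C.run_factors (p := p)
      refine ⟨max kB n, fun s r hs hr => ?_⟩
      obtain ⟨fB, hfB⟩ := hB s s (by omega) (by omega)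
      obtain ⟨f, hf⟩ := hn (σ := EgoSeed (_ + 1) τ s) (k := 0) (r := r) (by omega)
        (fun a => Fin.append (g a.1) (fB a.2))
      refine ⟨f, fun G γ v => ?_⟩
      rw [HEGNN.run_nest, ← hf]
      simp only [hfB]
      rfl

theorem Fin.append_inj {α : Type} {m n : ℕ} {a a' : Fin m → α} {b b' : Fin n → α}
    (h : Fin.append a b = Fin.append a' b') : a = a' ∧ b = b' :=
  ⟨funext fun i => by simpa using congrFun h (Fin.castAdd n i),
    funext fun j => by simpa using congrFun h (Fin.natAdd m j)⟩

noncomputable def encodeReal (σ : Type) [Countable σ] (x : σ) : ℝ :=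
  ((exists_injective_nat σ).choose x : ℝ)

theorem encodeReal_injective (σ : Type) [Countable σ] : Injective (encodeReal σ) :=
  fun _ _ h => (exists_injective_nat σ).choose_spec (Nat.cast_injective h)

theorem GNNLayer.exists_apply_eq {σ : Type} {D D' : ℕ} {g : σ → Fin D → ℝ} (hg : Injective g)
    (h : σ → Fin D' → ℝ) :
    ∃ l : GNNLayer D D', ∀ (G : LabGraph p) (c : G.V → σ) (v : G.V),
      l.apply G (fun u => g (c u)) v = h (c v) := by
  have hinj : Injective fun t => Fin.append (g t) (0 : Fin D → ℝ) :=
    fun a b hab => hg (Fin.append_inj hab).1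
  exact ⟨⟨0, extend (fun t => Fin.append (g t) 0) h 0⟩, fun G c v => hinj.extend_apply h 0 (c v)⟩

theorem GNNLayer.exists_apply_encodeReal_eq {σ : Type} [Countable σ] {D' : ℕ}
    (h : σ × Multiset σ → Fin D' → ℝ) :
    ∃ l : GNNLayer 1 D', ∀ (G : LabGraph p) (c : G.V → σ) (v : G.V),
      l.apply G (fun u _ => encodeReal σ (c u)) v = h (c v, (G.nbrFinset v).val.map c) := by
  set e : σ → Fin 1 → ℝ := fun t _ => encodeReal σ t
  have he : Injective e := fun a b hab => encodeReal_injective σ (congrFun hab 0)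
  set agg : Multiset (Fin 1 → ℝ) → Fin 1 → ℝ :=
    extend (Multiset.map e) (fun M _ => encodeReal (Multiset σ) M) 0
  have hagg : ∀ M, agg (M.map e) = fun _ => encodeReal (Multiset σ) M :=
    (Multiset.map_injective he).extend_apply _ 0
  have hinj : Injective fun a : σ × Multiset σ => Fin.append (e a.1) (agg (a.2.map e)) := by
    intro a b hab
    obtain ⟨h₁, h₂⟩ := Fin.append_inj hab
    rw [hagg, hagg] at h₂
    exact Prod.ext (he h₁) (encodeReal_injective _ (congrFun h₂ 0))
  refine ⟨⟨agg, extend (fun a : σ × Multiset σ => Fin.append (e a.1) (agg (a.2.map e))) h 0⟩,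
    fun G c v => ?_⟩
  exact (GNNLayer.apply_comp _ G e c v).trans (hinj.extend_apply h 0 _)

def GNN.snoc : {D D' D'' : ℕ} → GNN D D' → GNNLayer D' D'' → GNN D D''
  | _, _, _, .last l, l' => .cons l (.last l')
  | _, _, _, .cons l A, l' => .cons l (A.snoc l')

theorem GNN.run_snoc : ∀ {D D' D'' : ℕ} (A : GNN D D') (l : GNNLayer D' D'') (G : LabGraph p)
    (emb : G.V → Fin D → ℝ), (A.snoc l).run G emb = l.apply G (A.run G emb)
  | _, _, _, .last _, _, _, _ => rfl
  | _, _, _, .cons l₀ A, l, G, emb => A.run_snoc l G (l₀.apply G emb)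

theorem GNN.exists_run_eq {σ : Type} [Countable σ] {D : ℕ} {g : σ → Fin D → ℝ}
    (hg : Injective g) : ∀ (k : ℕ) {D' : ℕ} (h : RefColour σ k → Fin D' → ℝ),
    ∃ A : GNN D D', ∀ (G : LabGraph p) (c : G.V → σ) (v : G.V),
      A.run G (fun u => g (c u)) v = h (G.refineColour c k v)
  | 0, _, h => by
      obtain ⟨l, hl⟩ := GNNLayer.exists_apply_eq (p := p) hg h
      exact ⟨.last l, hl⟩
  | k + 1, _, h => by
      obtain ⟨A, hA⟩ := GNN.exists_run_eq hg k fun a _ => encodeReal _ a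
      obtain ⟨l, hl⟩ := GNNLayer.exists_apply_encodeReal_eq (p := p) (σ := RefColour σ k) h
      refine ⟨A.snoc l, fun G c v => ?_⟩
      rw [GNN.run_snoc, funext (hA G c)]
      exact hl G (G.refineColour c k) v

theorem appendMark_injective {τ : Type} {D : ℕ} {g : τ → Fin D → ℝ} (hg : Injective g) :
    Injective (appendMark g) := by
  rintro ⟨t, m⟩ ⟨t', m'⟩ h
  obtain ⟨h₁, h₂⟩ := Fin.append_inj h
  have hm : m ↔ m' := by
    by_cases hm : m <;> by_cases hm' : m' <;> simp_all [funext_iff]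
  exact Prod.ext (hg h₁) (propext hm)

theorem HEGNN.exists_run_eq : ∀ (d k : ℕ) {τ : Type} [Countable τ] {D D' : ℕ}
    {g : τ → Fin D → ℝ}, Injective g → ∀ h : RefColour (EgoSeed d τ k) k → Fin D' → ℝ,
    ∃ A : HEGNN d D D', ∀ (G : LabGraph p) (γ : G.V → τ) (v : G.V),
      A.run G (fun u => g (γ u)) v = h (G.refineColour (G.egoSeed d k γ) k v)
  | 0, k, _, _, _, _, _, hg, h => by
      obtain ⟨A, hA⟩ := GNN.exists_run_eq (p := p) hg k h
      exact ⟨.base A, hA⟩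
  | d + 1, k, τ, _, D, _, g, hg, h => by
      obtain ⟨B, hB⟩ := HEGNN.exists_run_eq (D' := 1) d k (appendMark_injective hg)
        fun a _ => encodeReal _ a
      have hg₂ : Injective fun a : EgoSeed (d + 1) τ k =>
          Fin.append (g a.1) (fun _ : Fin 1 => encodeReal _ a.2) := by
        intro a b hab
        obtain ⟨h₁, h₂⟩ := Fin.append_inj hab
        exact Prod.ext (hg h₁) (encodeReal_injective _ (congrFun h₂ 0))
      obtain ⟨C, hC⟩ := GNN.exists_run_eq (p := p) hg₂ k h
      refine ⟨.nest B C, fun G γ v => ?_⟩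
      rw [HEGNN.run_nest, ← hC]
      simp only [hB]
      rfl

noncomputable def multihot {q : ℕ} (t : Fin q → Prop) : Fin q → ℝ :=
  fun i => if t i then 1 else 0

theorem multihot_injective {q : ℕ} : Injective (multihot (q := q)) := by
  intro a b h
  funext i
  have := congrFun h i
  by_cases ha : a i <;> by_cases hb : b i <;> simp_all [multihot]

theorem LabGraph.embG_eq (G : LabGraph p) : G.embG = fun u => multihot (G.lab u) := rfl

theorem HEGNN.exists_clsP_iff (d k : ℕ) (c : RefColour (EgoSeed d (Fin p → Prop) k) k) :
    ∃ A : HEGNN d p 1, ∀ (G : LabGraph p) (v : G.V), A.clsP G v ↔ G.egoColour d k v = c := by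
  obtain ⟨A, hA⟩ := HEGNN.exists_run_eq (p := p) d k multihot_injective
    fun a _ => if a = c then 1 else 0
  refine ⟨A, fun G v => ?_⟩
  rw [HEGNN.clsP, G.embG_eq, hA]
  split_ifs <;> simp_all [LabGraph.egoColour]

theorem hegnn_agree_iff_egoColour_eq {d : ℕ} {G G' : LabGraph p} {v : G.V} {v' : G'.V} :
    (∀ A : HEGNN d p 1, A.clsP G v ↔ A.clsP G' v') ↔
      ∀ k, G.egoColour d k v = G'.egoColour d k v' := by
  constructor
  · intro h k
    obtain ⟨A, hA⟩ := HEGNN.exists_clsP_iff d k (G.egoColour d k v)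
    exact ((hA G' v').1 ((h A).1 ((hA G v).2 rfl))).symm
  · intro h A
    obtain ⟨k, hk⟩ := A.run_factors multihot
    obtain ⟨f, hf⟩ := hk k k le_rfl le_rfl
    rw [HEGNN.clsP, HEGNN.clsP, G.embG_eq, G'.embG_eq, hf, hf]
    exact Iff.of_eq (congrArg (fun c => 0 < f c 0) (h k))

theorem LabGraph.card_adj_comp {σ : Type} (G : LabGraph p) (γ : G.V → σ) (P : σ → Prop)
    (v : G.V) : Nat.card {u // G.adj v u ∧ P (γ u)} =
      Multiset.card (((G.nbrFinset v).val.map γ).filter P) := by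
  rw [Nat.card_eq_fintype_card, Fintype.card_subtype, Multiset.filter_map, Multiset.card_map,
    LabGraph.nbrFinset, ← Finset.filter_val, Finset.filter_filter]
  rfl

theorem Multiset.eq_of_count_le_of_card_le {α : Type} {M N : Multiset α}
    (hcount : ∀ t ∈ M, M.count t ≤ N.count t) (hcard : Multiset.card N ≤ Multiset.card M) :
    N = M := by
  refine (Multiset.eq_of_le_of_card_le (Multiset.le_iff_count.2 fun t => ?_) hcard).symm
  by_cases ht : t ∈ M
  · exact hcount t ht
  · simp [Multiset.count_eq_zero_of_notMem ht]

namespace GMLd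

theorem sat_congr_free (φ : GMLd p) {G : LabGraph p} {g g' : ℕ → Option G.V}
    (h : ∀ x ∈ φ.free, g x = g' x) (v : G.V) : φ.sat G g v ↔ φ.sat G g' v := by
  induction φ generalizing g g' v with
  | prop | top => rfl
  | var x => simp [sat, h x rfl]
  | and φ ψ ihφ ihψ =>
    exact and_congr (ihφ (fun x hx => h x (Or.inl hx)) v) (ihψ (fun x hx => h x (Or.inr hx)) v)
  | not φ ih => exact not_congr (ih h v)
  | dia k φ ih => simp only [sat, ih h]
  | bind x φ ih =>
    refine ih (fun y hy => ?_) v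
    by_cases hyx : y = x
    · simp [hyx]
    · simp [hyx, h y ⟨hy, hyx⟩]

def bigAnd : List (GMLd p) → GMLd p
  | [] => top
  | φ :: l => φ.and (bigAnd l)

theorem sat_bigAnd {G : LabGraph p} {g : ℕ → Option G.V} {v : G.V} (l : List (GMLd p)) :
    (bigAnd l).sat G g v ↔ ∀ φ ∈ l, φ.sat G g v := by
  induction l with
  | nil => simp [bigAnd, sat]
  | cons φ l ih => simp [bigAnd, sat, ih]

def fragment (F : Set ℕ) (d : ℕ) : Set (GMLd p) := {φ | φ.free ⊆ F ∧ φ.bindDepth ≤ d}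

theorem bigAnd_mem_fragment {F : Set ℕ} {d : ℕ} (l : List (GMLd p))
    (h : ∀ φ ∈ l, φ ∈ fragment F d) : bigAnd l ∈ fragment F d := by
  induction l with
  | nil => simp [bigAnd, fragment, free, bindDepth]
  | cons φ l ih =>
    obtain ⟨⟨hφ₁, hφ₂⟩, hl⟩ := List.forall_mem_cons.1 h
    obtain ⟨ih₁, ih₂⟩ := ih hl
    exact ⟨Set.union_subset hφ₁ ih₁, max_le hφ₂ ih₂⟩

def Defines {σ : Type} (χ : σ → GMLd p) (G : LabGraph p) (g : ℕ → Option G.V) (γ : G.V → σ) :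
    Prop :=
  ∀ t v, (χ t).sat G g v ↔ γ v = t

noncomputable def refineChar {σ : Type} (χ : σ → GMLd p) (a : σ × Multiset σ) : GMLd p :=
  (χ a.1).and ((dia (Multiset.card a.2 + 1) top).not.and
    (bigAnd (a.2.toFinset.toList.map fun t => dia (a.2.count t) (χ t))))

theorem refineChar_mem_fragment {σ : Type} {χ : σ → GMLd p} {F : Set ℕ} {d : ℕ}
    (h : ∀ t, χ t ∈ fragment F d) (a : σ × Multiset σ) : refineChar χ a ∈ fragment F d := by
  obtain ⟨h₁, h₂⟩ := h a.1
  obtain ⟨hl₁, hl₂⟩ := bigAnd_mem_fragment (F := F) (d := d)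
    (a.2.toFinset.toList.map fun t => dia (a.2.count t) (χ t))
    (by simpa [fragment, free, bindDepth] using fun t _ => h t)
  refine ⟨?_, ?_⟩ <;> simp_all [refineChar, free, bindDepth]

theorem Defines.refineChar {σ : Type} {χ : σ → GMLd p} {G : LabGraph p} {g : ℕ → Option G.V}
    {γ : G.V → σ} (h : Defines χ G g γ) :
    Defines (refineChar χ) G g fun v => (γ v, (G.nbrFinset v).val.map γ) := by
  rintro ⟨t₀, M⟩ v
  have hcount : ∀ t, Nat.card {u // G.adj v u ∧ (χ t).sat G g u} =
      ((G.nbrFinset v).val.map γ).count t := by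
    intro t
    simp_rw [h t]
    rw [G.card_adj_comp γ (· = t) v, Multiset.count_eq_card_filter_eq]
    simp_rw [eq_comm]
  have hcard : Nat.card {u // G.adj v u ∧ True} = Multiset.card ((G.nbrFinset v).val.map γ) := by
    simp [Nat.card_eq_fintype_card, Fintype.card_subtype, LabGraph.nbrFinset]
    rfl
  simp only [GMLd.refineChar, sat, sat_bigAnd, List.forall_mem_map, Finset.mem_toList,
    Multiset.mem_toFinset, hcount, hcard, h t₀, Prod.mk.injEq]
  constructor
  · rintro ⟨rfl, hcard', hle⟩
    exact ⟨rfl, Multiset.eq_of_count_le_of_card_le hle (by omega)⟩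
  · rintro ⟨rfl, rfl⟩
    exact ⟨rfl, by omega, fun _ _ => le_rfl⟩

noncomputable def iterChar {σ : Type} (χ : σ → GMLd p) : (k : ℕ) → RefColour σ k → GMLd p
  | 0 => χ
  | k + 1 => refineChar (iterChar χ k)

theorem iterChar_mem_fragment {σ : Type} {χ : σ → GMLd p} {F : Set ℕ} {d : ℕ}
    (h : ∀ t, χ t ∈ fragment F d) : ∀ k c, iterChar χ k c ∈ fragment F d
  | 0 => h
  | k + 1 => refineChar_mem_fragment (iterChar_mem_fragment h k)

theorem Defines.iterChar {σ : Type} {χ : σ → GMLd p} {G : LabGraph p} {g : ℕ → Option G.V}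
    {γ : G.V → σ} (h : Defines χ G g γ) : ∀ k, Defines (iterChar χ k) G g (G.refineColour γ k)
  | 0 => h
  | k + 1 => (h.iterChar k).refineChar

noncomputable def markChar {τ : Type} (j : ℕ) (β : τ → GMLd p) (a : τ × Prop) : GMLd p :=
  (β a.1).and (if a.2 then var j else (var j).not)

theorem markChar_mem_fragment {τ : Type} {j : ℕ} {β : τ → GMLd p}
    (h : ∀ t, β t ∈ fragment (Set.Iio j) 0) (a : τ × Prop) :
    markChar j β a ∈ fragment (Set.Iio (j + 1)) 0 := by
  obtain ⟨h₁, h₂⟩ := h a.1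
  unfold markChar
  split_ifs <;> exact ⟨Set.union_subset (h₁.trans (Set.Iio_subset_Iio j.le_succ)) (by simp [free]),
    by simpa [bindDepth] using h₂⟩

theorem Defines.markChar {τ : Type} {β : τ → GMLd p} {G : LabGraph p} {g : ℕ → Option G.V}
    {γ : G.V → τ} {j : ℕ} (h : Defines β G g γ) (hj : ∀ t, j ∉ (β t).free) (v : G.V) :
    Defines (markChar j β) G (update g j (some v)) (markAt γ v) := by
  rintro ⟨t, m⟩ w
  have hβ : (β t).sat G (update g j (some v)) w ↔ γ w = t :=
    (sat_congr_free _ (fun x hx => update_of_ne (ne_of_mem_of_not_mem hx (hj t)) _ _) w).trans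
      (h t w)
  by_cases hm : m <;> simp [GMLd.markChar, sat, hβ, hm, markAt, @eq_comm _ v w]

/- The binder for the marking of nesting level `j` uses the variable `j`, so the
characteristic formulas of colours with `j` marks have their free variables below `j`. -/
noncomputable def egoChar (s : ℕ) : (d : ℕ) → {τ : Type} → ℕ → (τ → GMLd p) → EgoSeed d τ s →
    GMLd p
  | 0, _, _, β => β
  | d + 1, _, j, β => fun a =>
      (β a.1).and (bind j (iterChar (egoChar s d (j + 1) (markChar j β)) s a.2))

theorem egoChar_mem_fragment (s : ℕ) : ∀ (d : ℕ) {τ : Type} (j : ℕ) (β : τ → GMLd p),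
    (∀ t, β t ∈ fragment (Set.Iio j) 0) → ∀ a, egoChar s d j β a ∈ fragment (Set.Iio j) d
  | 0, _, _, _, h => h
  | d + 1, _, j, β, h => fun a => by
      obtain ⟨h₁, h₂⟩ := h a.1
      obtain ⟨hi₁, hi₂⟩ := iterChar_mem_fragment
        (egoChar_mem_fragment s d (j + 1) (markChar j β) (markChar_mem_fragment h)) s a.2
      refine ⟨Set.union_subset h₁ fun x ⟨hx, hxj⟩ => ?_, max_le (h₂.trans (Nat.zero_le _)) ?_⟩
      · exact lt_of_le_of_ne (Nat.lt_succ_iff.1 (hi₁ hx)) hxj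
      · exact Nat.succ_le_succ hi₂

theorem Defines.egoChar {G : LabGraph p} (s : ℕ) : ∀ (d : ℕ) {τ : Type} (j : ℕ)
    {β : τ → GMLd p} {g : ℕ → Option G.V} {γ : G.V → τ}, (∀ t, (β t).free ⊆ Set.Iio j) →
    Defines β G g γ → Defines (egoChar s d j β) G g (G.egoSeed d s γ)
  | 0, _, _, _, _, _, _, h => h
  | d + 1, _, j, β, g, γ, hfree, h => by
      rintro ⟨t, c⟩ v
      have hmark : ∀ a, (GMLd.markChar j β a).free ⊆ Set.Iio (j + 1) := fun a =>
        Set.union_subset ((hfree a.1).trans (Set.Iio_subset_Iio j.le_succ))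
          (by split_ifs <;> simp [free])
      have hinner := (Defines.egoChar s d (j + 1) hmark
        (h.markChar (fun t hj => lt_irrefl j (hfree t hj)) v)).iterChar s c v
      simp only [GMLd.egoChar, sat, h t v, hinner]
      exact Prod.mk_inj.symm

noncomputable def labChar (t : Fin p → Prop) : GMLd p :=
  bigAnd ((List.finRange p).map fun i => if t i then prop i else (prop i).not)

theorem labChar_mem_fragment (F : Set ℕ) (t : Fin p → Prop) : labChar t ∈ fragment F 0 :=
  bigAnd_mem_fragment _ fun φ hφ => by
    obtain ⟨i, -, rfl⟩ := List.mem_map.1 hφ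
    split_ifs <;> simp [fragment, free, bindDepth]

theorem defines_labChar (G : LabGraph p) (g : ℕ → Option G.V) : Defines labChar G g G.lab := by
  intro t v
  simp only [labChar, sat_bigAnd, List.forall_mem_map, List.mem_finRange, true_implies,
    funext_iff]
  refine forall_congr' fun i => ?_
  by_cases hi : t i <;> simp [hi, sat]

theorem exists_sentence_iff (d k : ℕ) (c : RefColour (EgoSeed d (Fin p → Prop) k) k) :
    ∃ χ : GMLd p, χ.Sentence ∧ χ.bindDepth ≤ d ∧
      ∀ (G : LabGraph p) (v : G.V), χ.satS G v ↔ G.egoColour d k v = c := by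
  obtain ⟨hfree, hdepth⟩ := iterChar_mem_fragment
    (egoChar_mem_fragment k d 0 labChar fun t => labChar_mem_fragment _ t) k c
  refine ⟨iterChar (egoChar k d 0 labChar) k c, Set.subset_eq_empty hfree (by simp), hdepth,
    fun G v => ?_⟩
  exact (Defines.egoChar k d 0 (fun t => (labChar_mem_fragment _ t).1)
    (defines_labChar G _)).iterChar k c v

/- `obs` decodes a colour into the labels of the node and the set of variables assigned to it;
under `↓x` the marking is decoded as the new value of `x`. -/
theorem sat_factors (φ : GMLd p) : ∀ {d : ℕ}, φ.bindDepth ≤ d → ∀ {τ : Type}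
    (obs : τ → (Fin p → Prop) × (ℕ → Prop)), ∃ k₀, ∀ s r, k₀ ≤ s → k₀ ≤ r →
    ∃ f : RefColour (EgoSeed d τ s) r → Prop, ∀ (G : LabGraph p) (γ : G.V → τ)
      (g : ℕ → Option G.V), (∀ u, obs (γ u) = (G.lab u, fun x => g x = some u)) →
      ∀ v, φ.sat G g v ↔ f (G.refineColour (G.egoSeed d s γ) r v) := by
  induction φ with
  | prop i =>
    refine fun _ _ obs => ⟨0, fun s r _ _ => ⟨fun c => (obs c.root.base).1 i,
      fun G γ g hobs v => ?_⟩⟩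
    simp only [sat, G.root_refineColour, G.base_egoSeed, hobs]
  | var x =>
    refine fun _ _ obs => ⟨0, fun s r _ _ => ⟨fun c => (obs c.root.base).2 x,
      fun G γ g hobs v => ?_⟩⟩
    simp only [sat, G.root_refineColour, G.base_egoSeed, hobs]
  | top => exact fun _ _ _ => ⟨0, fun _ _ _ _ => ⟨fun _ => True, fun _ _ _ _ _ => Iff.rfl⟩⟩
  | and φ ψ ihφ ihψ =>
    intro d hd τ obs
    obtain ⟨k₁, h₁⟩ := ihφ ((le_max_left _ _).trans hd) obs
    obtain ⟨k₂, h₂⟩ := ihψ ((le_max_right _ _).trans hd) obs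
    refine ⟨max k₁ k₂, fun s r hs hr => ?_⟩
    obtain ⟨f₁, hf₁⟩ := h₁ s r (le_of_max_le_left hs) (le_of_max_le_left hr)
    obtain ⟨f₂, hf₂⟩ := h₂ s r (le_of_max_le_right hs) (le_of_max_le_right hr)
    exact ⟨fun c => f₁ c ∧ f₂ c, fun G γ g hobs v =>
      and_congr (hf₁ G γ g hobs v) (hf₂ G γ g hobs v)⟩
  | not φ ih =>
    intro d hd τ obs
    obtain ⟨k₀, h⟩ := ih hd obs
    refine ⟨k₀, fun s r hs hr => ?_⟩
    obtain ⟨f, hf⟩ := h s r hs hr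
    exact ⟨fun c => ¬ f c, fun G γ g hobs v => not_congr (hf G γ g hobs v)⟩
  | dia m ψ ih =>
    intro d hd τ obs
    obtain ⟨k₀, h⟩ := ih hd obs
    refine ⟨k₀ + 1, fun s r hs hr => ?_⟩
    obtain ⟨r, rfl⟩ := Nat.exists_eq_add_of_le' hr
    obtain ⟨f, hf⟩ := h s (r + k₀) (by omega) (by omega)
    refine ⟨fun c => m ≤ Multiset.card (c.2.filter f), fun G γ g hobs v => ?_⟩
    simp only [sat, hf G γ g hobs]
    rw [G.card_adj_comp _ f]
    rfl
  | bind x ψ ih =>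
    intro d hd τ obs
    cases d with
    | zero => simp [bindDepth] at hd
    | succ d =>
    obtain ⟨k₀, h⟩ := ih (Nat.le_of_succ_le_succ hd) fun a : τ × Prop =>
      ((obs a.1).1, update (obs a.1).2 x a.2)
    refine ⟨k₀, fun s r hs _ => ?_⟩
    obtain ⟨f, hf⟩ := h s s hs hs
    refine ⟨fun c => f c.root.2, fun G γ g hobs v => ?_⟩
    refine (hf G (markAt γ v) _ (fun u => ?_) v).trans (Iff.of_eq (congrArg
      (fun a : EgoSeed (d + 1) τ s => f a.2) (G.root_refineColour (G.egoSeed (d + 1) s γ) r v).symm))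
    simp only [markAt, hobs u, Prod.mk.injEq, true_and]
    funext y
    by_cases hy : y = x
    · simp [hy, eq_comm]
    · simp [hy]

end GMLd

theorem gml_agree_iff_egoColour_eq {d : ℕ} {G G' : LabGraph p} {v : G.V} {v' : G'.V} :
    (∀ φ : GMLd p, φ.Sentence → φ.bindDepth ≤ d → (φ.satS G v ↔ φ.satS G' v')) ↔
      ∀ k, G.egoColour d k v = G'.egoColour d k v' := by
  constructor
  · intro h k
    obtain ⟨χ, hχ, hd, hχc⟩ := GMLd.exists_sentence_iff d k (G.egoColour d k v)
    exact ((hχc G' v').1 ((h χ hχ hd).1 ((hχc G v).2 rfl))).symm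
  · intro h φ _ hd
    obtain ⟨k, hk⟩ := φ.sat_factors hd fun t => (t, fun _ => False)
    obtain ⟨f, hf⟩ := hk k k le_rfl le_rfl
    have hobs : ∀ (H : LabGraph p) (u : H.V), (H.lab u, fun _ : ℕ => False) =
        (H.lab u, fun _ : ℕ => (none : Option H.V) = some u) := by
      simp
    rw [GMLd.satS, GMLd.satS, hf G _ _ (hobs G), hf G' _ _ (hobs G')]
    exact Iff.of_eq (congrArg f (h k))

end EgoRefinement

/-- For every `d ≥ 0`, ρ(HE-GNN-(d)) = ρ(GML(↓^d)); consequently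
(taking the union over all `d`), ρ(HE-GNN) = ρ(GML(↓)): two pointed graphs agree on
all nesting-depth-`d` HE-GNN node classifiers iff they satisfy exactly the same
GML(↓) sentences of ↓-nesting-depth at most `d`. -/
theorem hegnn_separation_eq_gml_bind (p : ℕ) :
    (∀ (d : ℕ) (G G' : LabGraph p) (v : G.V) (v' : G'.V),
      (∀ A : HEGNN d p 1, (A.clsP G v ↔ A.clsP G' v')) ↔
      (∀ φ : GMLd p, φ.Sentence → φ.bindDepth ≤ d → (φ.satS G v ↔ φ.satS G' v'))) ∧
    (∀ (G G' : LabGraph p) (v : G.V) (v' : G'.V),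
      (∀ (d : ℕ) (A : HEGNN d p 1), (A.clsP G v ↔ A.clsP G' v')) ↔
      (∀ φ : GMLd p, φ.Sentence → (φ.satS G v ↔ φ.satS G' v'))) := by
  have hdepth : ∀ (d : ℕ) (G G' : LabGraph p) (v : G.V) (v' : G'.V),
      (∀ A : HEGNN d p 1, (A.clsP G v ↔ A.clsP G' v')) ↔
      (∀ φ : GMLd p, φ.Sentence → φ.bindDepth ≤ d → (φ.satS G v ↔ φ.satS G' v')) :=
    fun _ _ _ _ _ => hegnn_agree_iff_egoColour_eq.trans gml_agree_iff_egoColour_eq.symm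
  refine ⟨hdepth, fun G G' v v' => ⟨fun h φ hφ => ?_, fun h d => ?_⟩⟩
  · exact (hdepth _ G G' v v').1 (h φ.bindDepth) φ hφ le_rfl
  · exact (hdepth d G G' v v').2 fun φ hφ _ => h φ hφ
end

section
/- For all graphs G, G': G is distinguished from G' by WL-IR with zero individualization steps (i.e., G ≢_{WL-IR-0} G') if and only if G is distinguished from G' at the graph level by some GNN node classifier (i.e., G ≢_{GNN} G'). -/
open Classical

/-!
A GNN layer combines a node's embedding with the multiset of its neighbours' embeddings, so
the output of an `L`-layer GNN at a node is a function of its WL colour after `L` rounds.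
Conversely, arbitrary combination and aggregation functions can carry the finitely many
colours that occur through real numbers, so one GNN runs `n` rounds of WL and then tests for
a colour `c`; counting its positive nodes counts `c`. Hence `G ≡_GNN G'` iff the WL colour
multisets of `G` and `G'` agree at every round.

WL-IR-0 compares these multisets only after `|G|` rounds. Agreement there propagates
backwards since refinement only splits colour classes, and forwards since, while the
multisets agree, the joint colouring of `G ⊔ G'` has at most `|G|` classes: it stops
splitting by round `|G|`, and from then on agreement at one round gives it at the next.
-/

theorem Multiset.map_eq_map_of_map_eq {α β γ δ : Type*} {s : Multiset α} {t : Multiset β}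
    {f : α → γ} {g : β → γ} {f' : α → δ} {g' : β → δ} (h : s.map f = t.map g)
    (hfg : ∀ a ∈ s, ∀ b ∈ t, f a = g b → f' a = g' b) : s.map f' = t.map g' := by
  rw [← Multiset.rel_eq, Multiset.rel_map] at h ⊢
  exact h.mono hfg

theorem Multiset.count_true_map_decide {α β : Type*} [DecidableEq β] (s : Multiset α)
    (f : α → β) (b : β) : (s.map fun a => decide (f a = b)).count true = (s.map f).count b := by
  simp [Multiset.count_map, eq_comm]

theorem Finset.card_image_le_card_image_of_factorsThrough {α β γ : Type*} [DecidableEq β]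
    [DecidableEq γ] {f : α → β} {g : α → γ} (h : f.FactorsThrough g) (s : Finset α) :
    (s.image f).card ≤ (s.image g).card := by
  rcases s.eq_empty_or_nonempty with rfl | ⟨a, -⟩
  · simp
  calc (s.image f).card = ((s.image g).image (Function.extend g f fun _ => f a)).card := by
        rw [Finset.image_image, h.extend_comp]
    _ ≤ (s.image g).card := Finset.card_image_le

theorem Function.FactorsThrough.of_card_image_eq {α β γ : Type*} [Fintype α] [DecidableEq β]
    [DecidableEq γ] {f : α → β} {g : α → γ} (h : f.FactorsThrough g)
    (hc : (Finset.univ.image f).card = (Finset.univ.image g).card) : g.FactorsThrough f := by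
  intro a b hab
  set φ := Function.extend g f fun _ => f a
  have himage : Finset.univ.image f = (Finset.univ.image g).image φ := by
    rw [Finset.image_image, h.extend_comp]
  have hinj : Set.InjOn φ (Finset.univ.image g) :=
    Finset.injOn_of_card_image_eq (himage ▸ hc)
  exact hinj (by simp) (by simp)
    ((h.extend_apply _ a).trans (hab.trans (h.extend_apply _ b).symm))

theorem Nat.exists_lt_eq_succ_of_le {f : ℕ → ℕ} {n : ℕ} (hf : ∀ i, f i ≤ f (i + 1))
    (h0 : 0 < f 0) (hn : f n ≤ n) : ∃ i < n, f i = f (i + 1) := by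
  by_contra! hne
  have hgrow : ∀ i ≤ n, f 0 + i ≤ f i := by
    intro i hi
    induction i with
    | zero => rfl
    | succ i ih => exact (ih (by omega)).trans_lt ((hf i).lt_of_ne (hne i hi))
  have := hgrow n le_rfl
  omega

theorem Set.Countable.exists_leftInvOn_real {α : Type*} [Nonempty α] {S : Set α}
    (hS : S.Countable) : ∃ (enc : α → ℝ) (dec : ℝ → α), S.LeftInvOn dec enc := by
  obtain ⟨f, hf⟩ := Set.countable_iff_exists_injOn.1 hS
  exact ⟨_, _, (Nat.cast_injective.comp_injOn hf).leftInvOn_invFunOn⟩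

theorem CTree.iso_node_nil_iff {C : Type} {l l' : Multiset C} :
    CTree.Iso (.node l []) (.node l' []) ↔ l = l' := by
  refine ⟨fun h => by cases h; rfl, ?_⟩
  rintro rfl
  exact .node (Equiv.refl _) fun i => i.elim0

namespace HashSetup

variable {p : ℕ} (H : HashSetup p)

theorem hInit_injective : Function.Injective H.hInit := fun a b h => by
  simpa using H.inj (a₁ := .inl a) (a₂ := .inl b) h

theorem hRefine_injective2 : Function.Injective2 H.hRefine := fun a b M M' h => by
  simpa [Prod.ext_iff] using
    H.inj (a₁ := .inr (.inl (a, M))) (a₂ := .inr (.inl (b, M'))) h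

instance : Nonempty H.C := ⟨H.hInit fun _ => True⟩

end HashSetup

section WL

variable {p : ℕ} (H : HashSetup p)

theorem wlIter_succ (G : LabGraph p) (d : ℕ) (col : G.V → H.C) :
    wlIter H G (d + 1) col = wlIter H G d (wlStep H G col) := by
  induction d with
  | zero => rfl
  | succ d ih => exact congrArg (wlStep H G) ih

theorem card_eq_of_colMultiset_eq {G₁ G₂ : LabGraph p} {c₁ : G₁.V → H.C} {c₂ : G₂.V → H.C}
    (h : colMultiset H G₁ c₁ = colMultiset H G₂ c₂) :
    Fintype.card G₁.V = Fintype.card G₂.V := by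
  simpa [colMultiset] using congrArg Multiset.card h

theorem wlStep_eq_wlStep_iff {G₁ G₂ : LabGraph p} {c₁ : G₁.V → H.C} {c₂ : G₂.V → H.C}
    {v : G₁.V} {w : G₂.V} :
    wlStep H G₁ c₁ v = wlStep H G₂ c₂ w ↔
      c₁ v = c₂ w ∧ (G₁.nbrFinset v).val.map c₁ = (G₂.nbrFinset w).val.map c₂ :=
  H.hRefine_injective2.eq_iff

theorem colMultiset_eq_of_colMultiset_wlStep_eq {G₁ G₂ : LabGraph p} {c₁ : G₁.V → H.C}
    {c₂ : G₂.V → H.C}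
    (h : colMultiset H G₁ (wlStep H G₁ c₁) = colMultiset H G₂ (wlStep H G₂ c₂)) :
    colMultiset H G₁ c₁ = colMultiset H G₂ c₂ :=
  Multiset.map_eq_map_of_map_eq h fun _ _ _ _ hvw => ((wlStep_eq_wlStep_iff H).1 hvw).1

theorem colMultiset_wlStep_eq {G₁ G₂ : LabGraph p} {c₁ : G₁.V → H.C} {c₂ : G₂.V → H.C}
    (h : colMultiset H G₁ c₁ = colMultiset H G₂ c₂)
    (hstable : ∀ v w, c₁ v = c₂ w → wlStep H G₁ c₁ v = wlStep H G₂ c₂ w) :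
    colMultiset H G₁ (wlStep H G₁ c₁) = colMultiset H G₂ (wlStep H G₂ c₂) :=
  Multiset.map_eq_map_of_map_eq h fun v _ w _ => hstable v w

variable {G : LabGraph p}

theorem factorsThrough_wlStep (col : G.V → H.C) : col.FactorsThrough (wlStep H G col) :=
  fun _ _ h => ((wlStep_eq_wlStep_iff H).1 h).1

theorem Function.FactorsThrough.wlStep {col : G.V → H.C}
    (h : (wlStep H G col).FactorsThrough col) :
    (wlStep H G (wlStep H G col)).FactorsThrough (wlStep H G col) := by
  intro v w hvw
  obtain ⟨-, hnbr⟩ := (wlStep_eq_wlStep_iff H).1 hvw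
  exact (wlStep_eq_wlStep_iff H).2
    ⟨hvw, Multiset.map_eq_map_of_map_eq hnbr fun _ _ _ _ hvw' => h hvw'⟩

theorem exists_le_factorsThrough_wlIter {col : G.V → H.C} {n : ℕ}
    (hn : (Finset.univ.image (wlIter H G n col)).card ≤ n) :
    ∃ i ≤ n, (wlIter H G (i + 1) col).FactorsThrough (wlIter H G i col) := by
  rcases isEmpty_or_nonempty G.V with hG | ⟨⟨v⟩⟩
  · exact ⟨0, Nat.zero_le n, fun a => isEmptyElim a⟩
  have hmono (i : ℕ) : (Finset.univ.image (wlIter H G i col)).card ≤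
      (Finset.univ.image (wlIter H G (i + 1) col)).card :=
    Finset.card_image_le_card_image_of_factorsThrough (factorsThrough_wlStep H _) _
  obtain ⟨i, hi, heq⟩ := Nat.exists_lt_eq_succ_of_le hmono
    (Finset.card_pos.2 ⟨_, Finset.mem_image_of_mem _ (Finset.mem_univ v)⟩) hn
  exact ⟨i, hi.le, (factorsThrough_wlStep H _).of_card_image_eq heq⟩

end WL

section DisjUnion

variable {p : ℕ} (H : HashSetup p) (G₁ G₂ : LabGraph p)

theorem LabGraph.mem_nbrFinset {G : LabGraph p} {v u : G.V} :
    u ∈ G.nbrFinset v ↔ G.adj v u := by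
  simp [LabGraph.nbrFinset]

theorem LabGraph.nbrFinset_disjUnion_inl (v : G₁.V) :
    (G₁.disjUnion G₂).nbrFinset (.inl v) = (G₁.nbrFinset v).map .inl := by
  ext (u | u)
  · exact LabGraph.mem_nbrFinset.trans
      ((LabGraph.mem_nbrFinset (G := G₁)).symm.trans (Finset.mem_map' .inl).symm)
  · exact LabGraph.mem_nbrFinset.trans
      ⟨False.elim, fun h => by obtain ⟨_, -, ⟨⟩⟩ := Finset.mem_map.1 h⟩

theorem LabGraph.nbrFinset_disjUnion_inr (v : G₂.V) :
    (G₁.disjUnion G₂).nbrFinset (.inr v) = (G₂.nbrFinset v).map .inr := by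
  ext (u | u)
  · exact LabGraph.mem_nbrFinset.trans
      ⟨False.elim, fun h => by obtain ⟨_, -, ⟨⟩⟩ := Finset.mem_map.1 h⟩
  · exact LabGraph.mem_nbrFinset.trans
      ((LabGraph.mem_nbrFinset (G := G₂)).symm.trans (Finset.mem_map' .inr).symm)

theorem wlIter_disjUnion_comp_inl (i : ℕ) (col : (G₁.disjUnion G₂).V → H.C) :
    wlIter H (G₁.disjUnion G₂) i col ∘ Sum.inl = wlIter H G₁ i (col ∘ Sum.inl) := by
  induction i with
  | zero => rfl
  | succ i ih =>
    funext v
    show wlStep H _ (wlIter H _ i col) (.inl v) = wlStep H G₁ (wlIter H G₁ i _) v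
    rw [← ih]
    simp only [wlStep, LabGraph.nbrFinset_disjUnion_inl, Finset.map_val]
    exact congrArg (H.hRefine _) (Multiset.map_map _ _ _)

theorem wlIter_disjUnion_comp_inr (i : ℕ) (col : (G₁.disjUnion G₂).V → H.C) :
    wlIter H (G₁.disjUnion G₂) i col ∘ Sum.inr = wlIter H G₂ i (col ∘ Sum.inr) := by
  induction i with
  | zero => rfl
  | succ i ih =>
    funext v
    show wlStep H _ (wlIter H _ i col) (.inr v) = wlStep H G₂ (wlIter H G₂ i _) v
    rw [← ih]
    simp only [wlStep, LabGraph.nbrFinset_disjUnion_inr, Finset.map_val]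
    exact congrArg (H.hRefine _) (Multiset.map_map _ _ _)

theorem card_image_le_of_colMultiset_eq {col : (G₁.disjUnion G₂).V → H.C}
    (h : colMultiset H G₁ (col ∘ Sum.inl) = colMultiset H G₂ (col ∘ Sum.inr)) :
    (Finset.univ.image col).card ≤ Fintype.card G₁.V := by
  have hsub : Finset.univ.image col ⊆ Finset.univ.image (col ∘ Sum.inl) := by
    intro c hc
    obtain ⟨v | w, -, rfl⟩ := Finset.mem_image.1 hc
    · exact Finset.mem_image_of_mem _ (Finset.mem_univ v)
    · have : col (.inr w) ∈ colMultiset H G₂ (col ∘ Sum.inr) :=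
        Multiset.mem_map_of_mem _ (Finset.mem_univ w)
      rw [← h] at this
      obtain ⟨v, -, hv⟩ := Multiset.mem_map.1 this
      exact Finset.mem_image.2 ⟨v, Finset.mem_univ v, hv⟩
  exact (Finset.card_le_card hsub).trans Finset.card_image_le

theorem colMultiset_wlIter_eq_of_eq_card
    (h : colMultiset H G₁ (wlIter H G₁ (Fintype.card G₁.V) (initCol H G₁)) =
      colMultiset H G₂ (wlIter H G₂ (Fintype.card G₁.V) (initCol H G₂))) (j : ℕ) :
    colMultiset H G₁ (wlIter H G₁ j (initCol H G₁)) =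
      colMultiset H G₂ (wlIter H G₂ j (initCol H G₂)) := by
  set n := Fintype.card G₁.V
  set col := fun i => wlIter H (G₁.disjUnion G₂) i (initCol H _)
  have hinl (i : ℕ) : wlIter H G₁ i (initCol H G₁) = col i ∘ Sum.inl :=
    (wlIter_disjUnion_comp_inl H G₁ G₂ i (initCol H _)).symm
  have hinr (i : ℕ) : wlIter H G₂ i (initCol H G₂) = col i ∘ Sum.inr :=
    (wlIter_disjUnion_comp_inr H G₁ G₂ i (initCol H _)).symm
  obtain ⟨i₀, hi₀, hstable₀⟩ := exists_le_factorsThrough_wlIter H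
    (card_image_le_of_colMultiset_eq H G₁ G₂ (hinl n ▸ hinr n ▸ h))
  have hstable : ∀ i ≥ i₀, (col (i + 1)).FactorsThrough (col i) := by
    intro i hi
    induction i, hi using Nat.le_induction with
    | base => exact hstable₀
    | succ i _ ih => exact ih.wlStep H
  rcases le_total j n with hj | hj
  · induction hj using Nat.decreasingInduction with
    | self => exact h
    | of_succ j _ ih => exact colMultiset_eq_of_colMultiset_wlStep_eq H ih
  · induction j, hj using Nat.le_induction with
    | base => exact h
    | succ j hj ih =>
      refine colMultiset_wlStep_eq H ih fun v w hvw => ?_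
      show wlIter H G₁ (j + 1) _ v = wlIter H G₂ (j + 1) _ w
      rw [hinl, hinr] at hvw ⊢
      exact hstable j (hi₀.trans hj) hvw

end DisjUnion

def GNN.depth : {D D' : ℕ} → GNN D D' → ℕ
  | _, _, .last _ => 1
  | _, _, .cons _ rest => rest.depth + 1

section Invariance

variable {p : ℕ} (H : HashSetup p) {G₁ G₂ : LabGraph p}

theorem GNNLayer.apply_eq_of_wlStep_eq {D D' : ℕ} (l : GNNLayer D D') {c₁ : G₁.V → H.C}
    {c₂ : G₂.V → H.C} {e₁ : G₁.V → Fin D → ℝ} {e₂ : G₂.V → Fin D → ℝ}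
    (he : ∀ v w, c₁ v = c₂ w → e₁ v = e₂ w) {v : G₁.V} {w : G₂.V}
    (h : wlStep H G₁ c₁ v = wlStep H G₂ c₂ w) : l.apply G₁ e₁ v = l.apply G₂ e₂ w := by
  obtain ⟨hvw, hnbr⟩ := (wlStep_eq_wlStep_iff H).1 h
  simp only [GNNLayer.apply, he v w hvw,
    Multiset.map_eq_map_of_map_eq hnbr fun v' _ w' _ => he v' w']

theorem GNN.run_eq_of_wlIter_eq {D D' : ℕ} (A : GNN D D') {c₁ : G₁.V → H.C}
    {c₂ : G₂.V → H.C} {e₁ : G₁.V → Fin D → ℝ} {e₂ : G₂.V → Fin D → ℝ}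
    (he : ∀ v w, c₁ v = c₂ w → e₁ v = e₂ w) {v : G₁.V} {w : G₂.V}
    (h : wlIter H G₁ A.depth c₁ v = wlIter H G₂ A.depth c₂ w) :
    A.run G₁ e₁ v = A.run G₂ e₂ w := by
  induction A generalizing c₁ c₂ v w with
  | last l => exact l.apply_eq_of_wlStep_eq H he h
  | cons l rest ih =>
    rw [depth, wlIter_succ, wlIter_succ] at h
    exact ih (fun v' w' h' => l.apply_eq_of_wlStep_eq H he h') h

theorem GNN.cls_eq_of_wlIter_eq (A : GNN p 1) {v : G₁.V} {w : G₂.V}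
    (h : wlIter H G₁ A.depth (initCol H G₁) v = wlIter H G₂ A.depth (initCol H G₂) w) :
    A.cls G₁ v = A.cls G₂ w := by
  have hemb (v : G₁.V) (w : G₂.V) (hvw : initCol H G₁ v = initCol H G₂ w) :
      G₁.embG v = G₂.embG w := by
    unfold LabGraph.embG
    rw [H.hInit_injective hvw]
  unfold GNN.cls GNN.clsP
  rw [A.run_eq_of_wlIter_eq H hemb h]

theorem gnnGraphEquiv_of_forall_colMultiset_eq
    (h : ∀ j, colMultiset H G₁ (wlIter H G₁ j (initCol H G₁)) =
      colMultiset H G₂ (wlIter H G₂ j (initCol H G₂))) : gnnGraphEquiv p G₁ G₂ := fun A =>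
  Multiset.map_eq_map_of_map_eq (h A.depth) fun _ _ _ _ => A.cls_eq_of_wlIter_eq H

end Invariance

section Simulation

-- Embeddings are one-dimensional: a colour `c` is stored as `enc c`, which is faithful on the
-- colours where `dec` inverts `enc`, and `e` packs a multiset of reals into one real.
variable {p : ℕ} (H : HashSetup p) (enc : H.C → ℝ) (dec : ℝ → H.C) (e : Multiset ℝ ≃ ℝ)

noncomputable def initLayer : GNNLayer p 1 where
  agg _ := 0
  com x _ := enc (H.hInit fun i => x (Fin.castAdd p i) = 1)

noncomputable def refineLayer : GNNLayer 1 1 where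
  agg M _ := e (M.map (· 0))
  com x _ := enc (H.hRefine (dec (x (Fin.castAdd 1 0))) ((e.symm (x (Fin.natAdd 1 0))).map dec))

noncomputable def testLayer (c : H.C) : GNNLayer 1 1 where
  agg _ := 0
  com x _ := if dec (x (Fin.castAdd 1 0)) = c then 1 else -1

noncomputable def refineTestGNN (c : H.C) : ℕ → GNN 1 1
  | 0 => .last (testLayer H dec c)
  | k + 1 => .cons (refineLayer H enc dec e) (refineTestGNN c k)

variable (K : LabGraph p)

theorem initLayer_apply :
    (initLayer H enc).apply K K.embG = fun v _ => enc (initCol H K v) := by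
  funext v _
  simp only [GNNLayer.apply, initLayer, Fin.append_left, initCol, LabGraph.embG]
  congr 2
  funext i
  simp

variable {K} {col : K.V → H.C}

theorem refineLayer_apply (hcol : ∀ v, dec (enc (col v)) = col v) :
    (refineLayer H enc dec e).apply K (fun v _ => enc (col v)) =
      fun v _ => enc (wlStep H K col v) := by
  funext v _
  simp only [GNNLayer.apply, refineLayer, wlStep, Fin.append_left, Fin.append_right,
    Equiv.symm_apply_apply, Multiset.map_map, Function.comp_def, hcol]

theorem testLayer_apply (c : H.C) (hcol : ∀ v, dec (enc (col v)) = col v) :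
    (testLayer H dec c).apply K (fun v _ => enc (col v)) =
      fun v _ => if col v = c then 1 else -1 := by
  funext v _
  simp only [GNNLayer.apply, testLayer, Fin.append_left, hcol]

theorem refineTestGNN_run (c : H.C) (k : ℕ)
    (hcol : ∀ j ≤ k, ∀ v, dec (enc (wlIter H K j col v)) = wlIter H K j col v) :
    (refineTestGNN H enc dec e c k).run K (fun v _ => enc (col v)) =
      fun v _ => if wlIter H K k col v = c then 1 else -1 := by
  induction k generalizing col with
  | zero => exact testLayer_apply H enc dec c (col := col) (hcol 0 le_rfl)
  | succ k ih =>
    rw [refineTestGNN, GNN.run, refineLayer_apply H enc dec e (col := col) (hcol 0 (Nat.zero_le _)),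
      ih fun j hj => ?_]
    · simp only [wlIter_succ]
    · rw [← wlIter_succ]
      exact hcol (j + 1) (by omega)

end Simulation

theorem cls_initLayer_refineTestGNN {p : ℕ} (H : HashSetup p) {enc : H.C → ℝ} {dec : ℝ → H.C}
    (e : Multiset ℝ ≃ ℝ) (c : H.C) (k : ℕ) {K : LabGraph p}
    (hdec : ∀ j ≤ k, ∀ v, dec (enc (wlIter H K j (initCol H K) v)) = wlIter H K j (initCol H K) v)
    (v : K.V) :
    (GNN.cons (initLayer H enc) (refineTestGNN H enc dec e c k)).cls K v =
      decide (wlIter H K k (initCol H K) v = c) := by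
  simp only [GNN.cls, GNN.clsP, GNN.run, initLayer_apply, refineTestGNN_run H enc dec e c k hdec]
  by_cases hc : wlIter H K k (initCol H K) v = c <;> simp [hc]

theorem colMultiset_wlIter_eq_of_gnnGraphEquiv {p : ℕ} (H : HashSetup p) {G₁ G₂ : LabGraph p}
    (h : gnnGraphEquiv p G₁ G₂) (n : ℕ) :
    colMultiset H G₁ (wlIter H G₁ n (initCol H G₁)) =
      colMultiset H G₂ (wlIter H G₂ n (initCol H G₂)) := by
  set S : Set H.C := ⋃ j ∈ Set.Iic n,
    Set.range (wlIter H G₁ j (initCol H G₁)) ∪ Set.range (wlIter H G₂ j (initCol H G₂))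
  have hS : S.Finite :=
    (Set.finite_Iic n).biUnion fun _ _ => (Set.finite_range _).union (Set.finite_range _)
  obtain ⟨enc, dec, hdec⟩ := hS.countable.exists_leftInvOn_real
  obtain ⟨e⟩ := Cardinal.eq.1 (Cardinal.mk_multiset_of_infinite ℝ)
  ext c
  have hcount := congrArg (Multiset.count true)
    (h (.cons (initLayer H enc) (refineTestGNN H enc dec e c n)))
  simp only [cls_initLayer_refineTestGNN H e c n
      fun j hj v => hdec (Set.mem_biUnion hj (.inl ⟨v, rfl⟩)),
    cls_initLayer_refineTestGNN H e c n
      fun j hj v => hdec (Set.mem_biUnion hj (.inr ⟨v, rfl⟩)),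
    Multiset.count_true_map_decide] at hcount
  exact hcount

theorem wlirEquiv_zero_iff {p : ℕ} (H : HashSetup p) (G₁ G₂ : LabGraph p) :
    WLIRequiv H G₁ G₂ 0 ↔
      colMultiset H G₁ (wlIter H G₁ (Fintype.card G₁.V) (initCol H G₁)) =
        colMultiset H G₂ (wlIter H G₂ (Fintype.card G₂.V) (initCol H G₂)) :=
  CTree.iso_node_nil_iff

/-- `G ≢_{WL-IR-0} G'` iff `G ≢_{GNN} G'` (graph-level separation
by GNN node classifiers). -/
theorem wlir0_eq_gnn (p : ℕ) (H : HashSetup p) (G G' : LabGraph p) :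
    ¬ WLIRequiv H G G' 0 ↔ ¬ gnnGraphEquiv p G G' := by
  rw [not_iff_not, wlirEquiv_zero_iff]
  constructor
  · intro h
    rw [← card_eq_of_colMultiset_eq H h] at h
    exact gnnGraphEquiv_of_forall_colMultiset_eq H (colMultiset_wlIter_eq_of_eq_card H G G' h)
  · intro h
    rw [← card_eq_of_colMultiset_eq H (colMultiset_wlIter_eq_of_gnnGraphEquiv H h 0)]
    exact colMultiset_wlIter_eq_of_gnnGraphEquiv H h _
end
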